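/- Let X ~ NB(μ, b) and suppose that conditional on X = x, X1 ~ BetaBinomial(x, εb', (1-ε)b') for b' > 0, ε ∈ (0,1). Then Var(X1) = ε Var(X) + ε(1-ε)(μ²/b)((b+1)/(b'+1) − 1), where Var(X) = μ + μ²/b. -/

import Mathlib

/-- The negative binomial pmf in the mean/overdispersion parameterization `NB(μ, b)`. -/
noncomputable def nbPMF (μ b : ℝ) (k : ℕ) : ℝ :=
  Real.Gamma (k + b) / (Real.Gamma b * (Nat.factorial k)) *
    (μ / (μ + b)) ^ k * (b / (μ + b)) ^ b

/-- The beta function `B(a, c) = Γ(a) Γ(c) / Γ(a + c)`. -/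
noncomputable def betaFn (a c : ℝ) : ℝ :=
  Real.Gamma a * Real.Gamma c / Real.Gamma (a + c)

/-- The beta-binomial pmf with `n` trials and shape parameters `a, c`, evaluated at `k`. -/
noncomputable def betaBinomPMF (n : ℕ) (a c : ℝ) (k : ℕ) : ℝ :=
  (n.choose k) * betaFn ((k : ℝ) + a) (((n - k : ℕ) : ℝ) + c) / betaFn a c

open Real Polynomial Nat Finset

/-! Both laws are stable under "multiply by the falling factorial `k (k-1) ⋯ (k-r+1)` and shift
by `r`": this turns `NB(μ, b)` into a multiple of `NB(μ (b + r) / b, b + r)` (same success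
probability `μ / (μ + b)`) and `BetaBinomial(n, a, c)` into a multiple of
`BetaBinomial(n - r, a + r, c)`. Hence the factorial moments of the mixture are
`E[K (K-1) ⋯ (K-r+1)] = b⁽ʳ⁾ (μ / b)^r a⁽ʳ⁾ / (a + c)⁽ʳ⁾` with rising factorials
`x⁽ʳ⁾ = x (x+1) ⋯ (x+r-1)`, and `Var K = E[K (K-1)] + E[K] - E[K]^2`. -/

theorem Real.Gamma_add_nat_eq_mul_ascPochhammer {c : ℝ} (hc : 0 < c) (n : ℕ) :
    Gamma (c + n) = Gamma c * (ascPochhammer ℝ n).eval c := by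
  induction n with
  | zero => simp
  | succ n ih =>
    rw [Nat.cast_succ, ← add_assoc, Gamma_add_one (by positivity), ih, ascPochhammer_succ_eval]
    ring

theorem Ring.choose_add_natCast_sub_one {K : Type*} [Field K] [CharZero K] (c : K) (n : ℕ) :
    Ring.choose (c + n - 1) n = (ascPochhammer K n).eval c / n ! := by
  rw [Ring.choose_eq_smul, descPochhammer_smeval_eq_ascPochhammer, ascPochhammer_smeval_eq_eval,
    smul_eq_mul, inv_mul_eq_div]
  congr 2
  ring

theorem hasSum_Gamma_div_mul_pow {c p : ℝ} (hc : 0 < c) (hp : |p| < 1) :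
    HasSum (fun n : ℕ => Gamma (n + c) / (Gamma c * n !) * p ^ n) ((1 - p) ^ (-c)) := by
  have h := (one_div_one_sub_rpow_hasFPowerSeriesOnBall_zero c).hasSum
    (y := p) (by simpa [enorm_eq_nnnorm, ← NNReal.coe_lt_one] using hp)
  have h1p : 0 ≤ 1 - p := by linarith [le_abs_self p]
  simp only [FormalMultilinearSeries.ofScalars_apply_eq, Ring.choose_add_natCast_sub_one,
    zero_add, one_div, ← rpow_neg h1p, smul_eq_mul] at h
  refine h.congr_fun fun n => ?_
  rw [add_comm (n : ℝ), Gamma_add_nat_eq_mul_ascPochhammer hc]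
  have := (Gamma_pos_of_pos hc).ne'
  field_simp

theorem Nat.choose_add_mul_descFactorial (n i r : ℕ) :
    n.choose (i + r) * (i + r).descFactorial r = n.descFactorial r * (n - r).choose i := by
  rw [Nat.descFactorial_eq_factorial_mul_choose, Nat.descFactorial_eq_factorial_mul_choose,
    mul_left_comm, Nat.choose_mul (Nat.le_add_left r i), Nat.add_sub_cancel, mul_assoc]

theorem hasSum_mul_descFactorial_of_add {R : Type*} [Ring R] [TopologicalSpace R]
    [IsTopologicalRing R] {f g : ℕ → R} {r : ℕ} {C s : R} (hg : HasSum g s)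
    (hfg : ∀ i, f (i + r) * (i + r).descFactorial r = C * g i) :
    HasSum (fun k => f k * k.descFactorial r) (C * s) := by
  rw [← hasSum_nat_add_iff' r]
  have hzero : ∑ k ∈ range r, f k * (k.descFactorial r : R) = 0 :=
    sum_eq_zero fun k hk => by
      rw [Nat.descFactorial_eq_zero_iff_lt.mpr (mem_range.mp hk), Nat.cast_zero, mul_zero]
  simpa only [hfg, hzero, sub_zero] using hg.mul_left C

theorem hasSum_prod_of_fiberwise_of_nonneg {α β : Type*} {f : α × β → ℝ} (hf : 0 ≤ f)
    {g : α → ℝ} {s : ℝ} (hfib : ∀ x, HasSum (fun y => f (x, y)) (g x)) (hg : HasSum g s) :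
    HasSum f s := by
  have hsum : Summable f := (summable_prod_of_nonneg hf).mpr
    ⟨fun x => (hfib x).summable, by simpa only [fun x => (hfib x).tsum_eq] using hg.summable⟩
  exact hg.unique (hsum.hasSum.prod_fiberwise hfib) ▸ hsum.hasSum

section NegativeBinomial

variable {μ b : ℝ}

theorem nbPMF_nonneg (hμ : 0 ≤ μ) (hb : 0 < b) (k : ℕ) : 0 ≤ nbPMF μ b k := by
  have := Gamma_pos_of_pos hb
  have := Gamma_pos_of_pos (show 0 < (k : ℝ) + b by positivity)
  unfold nbPMF
  positivity

theorem hasSum_nbPMF (hμ : 0 ≤ μ) (hb : 0 < b) : HasSum (nbPMF μ b) 1 := by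
  have hμb : 0 < μ + b := by positivity
  have hq : |μ / (μ + b)| < 1 := by
    rw [abs_of_nonneg (by positivity), div_lt_one hμb]; linarith
  have h := (hasSum_Gamma_div_mul_pow hb hq).mul_right ((b / (μ + b)) ^ b)
  rwa [show 1 - μ / (μ + b) = b / (μ + b) by field_simp; ring, ← rpow_add (by positivity),
    neg_add_cancel, rpow_zero] at h

theorem nbPMF_add_mul_descFactorial (hμ : 0 ≤ μ) (hb : 0 < b) (i r : ℕ) :
    nbPMF μ b (i + r) * (i + r).descFactorial r =
      Gamma (b + r) / Gamma b * (μ / b) ^ r * nbPMF (μ * (b + r) / b) (b + r) i := by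
  have hμb : 0 < μ + b := by positivity
  have hbr : 0 < b + r := by positivity
  have hq : μ * (b + r) / b / (μ * (b + r) / b + (b + r)) = μ / (μ + b) := by
    field_simp
  have hq' : (b + r) / (μ * (b + r) / b + (b + r)) = b / (μ + b) := by
    field_simp
  have hfact : ((i + r) ! : ℝ) = i ! * (i + r).descFactorial r := by
    exact_mod_cast (Nat.add_sub_cancel i r ▸
      Nat.factorial_mul_descFactorial (Nat.le_add_left r i)).symm
  unfold nbPMF
  rw [hq, hq', rpow_add (by positivity), rpow_natCast, hfact,
    show ((i + r : ℕ) : ℝ) + b = i + (b + r) by push_cast; ring]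
  have := hb.ne'
  have := (Gamma_pos_of_pos hb).ne'
  have := (Gamma_pos_of_pos hbr).ne'
  have : ((i + r).descFactorial r : ℝ) ≠ 0 := by
    exact_mod_cast (Nat.descFactorial_pos.mpr (Nat.le_add_left r i)).ne'
  simp only [div_pow, pow_add]
  field_simp

theorem hasSum_nbPMF_mul_descFactorial (hμ : 0 ≤ μ) (hb : 0 < b) (r : ℕ) :
    HasSum (fun k => nbPMF μ b k * k.descFactorial r)
      ((ascPochhammer ℝ r).eval b * (μ / b) ^ r) := by
  have h := hasSum_mul_descFactorial_of_add
    (hasSum_nbPMF (μ := μ * (b + r) / b) (b := b + r) (by positivity) (by positivity))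
    (nbPMF_add_mul_descFactorial hμ hb · r)
  rwa [mul_one, Gamma_add_nat_eq_mul_ascPochhammer hb,
    mul_div_cancel_left₀ _ (Gamma_pos_of_pos hb).ne'] at h

end NegativeBinomial

section BetaBinomial

variable {a c : ℝ}

theorem betaFn_pos (ha : 0 < a) (hc : 0 < c) : 0 < betaFn a c := by
  have := Gamma_pos_of_pos ha
  have := Gamma_pos_of_pos hc
  have := Gamma_pos_of_pos (add_pos ha hc)
  unfold betaFn
  positivity

theorem betaFn_add_one_right_add_betaFn_add_one_left (ha : 0 < a) (hc : 0 < c) :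
    betaFn a (c + 1) + betaFn (a + 1) c = betaFn a c := by
  have hac : 0 < a + c := add_pos ha hc
  unfold betaFn
  rw [show a + (c + 1) = a + c + 1 by ring, show a + 1 + c = a + c + 1 by ring,
    Gamma_add_one hac.ne', Gamma_add_one ha.ne', Gamma_add_one hc.ne']
  have := (Gamma_pos_of_pos hac).ne'
  field_simp
  ring

theorem betaFn_add_nat_div_betaFn (ha : 0 < a) (hc : 0 < c) (r : ℕ) :
    betaFn (a + r) c / betaFn a c =
      (ascPochhammer ℝ r).eval a / (ascPochhammer ℝ r).eval (a + c) := by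
  unfold betaFn
  rw [show a + r + c = a + c + r by ring, Gamma_add_nat_eq_mul_ascPochhammer ha,
    Gamma_add_nat_eq_mul_ascPochhammer (add_pos ha hc)]
  have := (Gamma_pos_of_pos ha).ne'
  have := (Gamma_pos_of_pos hc).ne'
  have := (Gamma_pos_of_pos (add_pos ha hc)).ne'
  have := (ascPochhammer_pos r (a + c) (add_pos ha hc)).ne'
  field_simp

theorem sum_antidiagonal_choose_mul_betaFn (n : ℕ) (ha : 0 < a) (hc : 0 < c) :
    ∑ ij ∈ antidiagonal n, (n.choose ij.1 : ℝ) * betaFn (ij.1 + a) (ij.2 + c) =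
      betaFn a c := by
  induction n generalizing a c with
  | zero => simp
  | succ n ih =>
    rw [sum_antidiagonal_choose_succ_mul (fun i j => betaFn (i + a) (j + c)),
      ← betaFn_add_one_right_add_betaFn_add_one_left ha hc, ← ih ha (add_pos hc one_pos),
      ← ih (add_pos ha one_pos) hc]
    congr 1 <;> refine sum_congr rfl fun ij hij => ?_
    · push_cast
      ring_nf
    · rw [Nat.choose_symm_of_eq_add (mem_antidiagonal.mp hij).symm]
      push_cast
      ring_nf

theorem betaBinomPMF_nonneg (ha : 0 < a) (hc : 0 < c) (n k : ℕ) : 0 ≤ betaBinomPMF n a c k := by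
  have := betaFn_pos ha hc
  have := betaFn_pos (a := k + a) (c := (n - k : ℕ) + c) (by positivity) (by positivity)
  unfold betaBinomPMF
  positivity

theorem hasSum_betaBinomPMF (ha : 0 < a) (hc : 0 < c) (n : ℕ) :
    HasSum (betaBinomPMF n a c) 1 := by
  have hsupp : ∀ k ∉ range (n + 1), betaBinomPMF n a c k = 0 := fun k hk => by
    rw [betaBinomPMF, Nat.choose_eq_zero_of_lt (by simpa using hk), Nat.cast_zero, zero_mul,
      zero_div]
  have hsum : ∑ k ∈ range (n + 1), betaBinomPMF n a c k = 1 := by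
    rw [← Nat.sum_antidiagonal_eq_sum_range_succ_mk (fun ij => betaBinomPMF n a c ij.1)]
    calc ∑ ij ∈ antidiagonal n, betaBinomPMF n a c ij.1
        = (∑ ij ∈ antidiagonal n, (n.choose ij.1 : ℝ) * betaFn (ij.1 + a) (ij.2 + c)) /
            betaFn a c := by
          rw [sum_div]
          refine sum_congr rfl fun ij hij => ?_
          rw [betaBinomPMF, ← mem_antidiagonal.mp hij, Nat.add_sub_cancel_left]
      _ = 1 := by rw [sum_antidiagonal_choose_mul_betaFn n ha hc, div_self (betaFn_pos ha hc).ne']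
  exact hsum ▸ hasSum_sum_of_ne_finset_zero hsupp

theorem betaBinomPMF_add_mul_descFactorial (ha : 0 < a) (hc : 0 < c) (n i r : ℕ) :
    betaBinomPMF n a c (i + r) * (i + r).descFactorial r =
      n.descFactorial r * (betaFn (a + r) c / betaFn a c) * betaBinomPMF (n - r) (a + r) c i := by
  have := (betaFn_pos ha hc).ne'
  have := (betaFn_pos (a := a + r) (by positivity) hc).ne'
  have hchoose : (n.choose (i + r) : ℝ) * (i + r).descFactorial r =
      n.descFactorial r * (n - r).choose i := by
    exact_mod_cast Nat.choose_add_mul_descFactorial n i r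
  unfold betaBinomPMF
  rw [Nat.sub_sub, add_comm r i, show ((i + r : ℕ) : ℝ) + a = i + (a + r) by push_cast; ring]
  field_simp
  linear_combination betaFn (i + (a + r)) ((n - (i + r) : ℕ) + c) * hchoose

theorem hasSum_betaBinomPMF_mul_descFactorial (ha : 0 < a) (hc : 0 < c) (n r : ℕ) :
    HasSum (fun k => betaBinomPMF n a c k * k.descFactorial r)
      (n.descFactorial r *
        ((ascPochhammer ℝ r).eval a / (ascPochhammer ℝ r).eval (a + c))) := by
  have h := hasSum_mul_descFactorial_of_add (hasSum_betaBinomPMF (a := a + r) (by positivity) hc _)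
    (betaBinomPMF_add_mul_descFactorial ha hc n · r)
  rwa [mul_one, betaFn_add_nat_div_betaFn ha hc] at h

end BetaBinomial

theorem hasSum_nbPMF_mul_betaBinomPMF_mul_descFactorial {μ b a c : ℝ} (hμ : 0 ≤ μ)
    (hb : 0 < b) (ha : 0 < a) (hc : 0 < c) (r : ℕ) :
    HasSum (fun q : ℕ × ℕ => nbPMF μ b q.1 * betaBinomPMF q.1 a c q.2 * q.2.descFactorial r)
      ((ascPochhammer ℝ r).eval b * (μ / b) ^ r *
        ((ascPochhammer ℝ r).eval a / (ascPochhammer ℝ r).eval (a + c))) := by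
  refine hasSum_prod_of_fiberwise_of_nonneg (fun q => ?_) (fun x => ?_)
    ((hasSum_nbPMF_mul_descFactorial hμ hb r).mul_right _)
  · have := nbPMF_nonneg hμ hb q.1
    have := betaBinomPMF_nonneg ha hc q.1 q.2
    positivity
  · simpa only [mul_assoc] using (hasSum_betaBinomPMF_mul_descFactorial ha hc x r).mul_left _

/-- Variance of a fold obtained by thinning with a possibly misspecified overdispersion
parameter `b'`: if `X ~ NB(μ, b)` and, conditional on `X = x`,
`X1 ~ BetaBinomial(x, εb', (1-ε)b')` for `b' > 0` and `ε ∈ (0,1)`, then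
`Var(X1) = ε Var(X) + ε(1-ε)(μ²/b)((b+1)/(b'+1) − 1)`, where `Var(X) = μ + μ²/b`. -/
theorem nb_thinning_variance (μ b b' ε : ℝ) (hμ : 0 < μ) (hb : 0 < b) (hb' : 0 < b')
    (hε : ε ∈ Set.Ioo (0 : ℝ) 1) :
    let j : ℕ → ℕ → ℝ := fun x k => nbPMF μ b x * betaBinomPMF x (ε * b') ((1 - ε) * b') k
    let E : (ℕ → ℕ → ℝ) → ℝ := fun g => ∑' q : ℕ × ℕ, j q.1 q.2 * g q.1 q.2
    E (fun _ k => (k : ℝ) ^ 2) - (E (fun _ k => (k : ℝ))) ^ 2 =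
      ε * (μ + μ ^ 2 / b) + ε * (1 - ε) * (μ ^ 2 / b) * ((b + 1) / (b' + 1) - 1) := by
  intro j E
  obtain ⟨hε0, hε1⟩ := hε
  have hM := hasSum_nbPMF_mul_betaBinomPMF_mul_descFactorial hμ.le hb
    (mul_pos hε0 hb') (mul_pos (sub_pos.mpr hε1) hb')
  have hsq : ∀ k : ℕ, (k : ℝ) ^ 2 = k.descFactorial 2 + k.descFactorial 1 := fun k => by
    rw [Nat.cast_descFactorial_two, Nat.descFactorial_one]
    ring
  have hab : ε * b' + (1 - ε) * b' = b' := by ring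
  have hE1 : E (fun _ k => (k : ℝ)) = μ * ε := by
    have h := (hM 1).tsum_eq
    simp only [Nat.descFactorial_one, ascPochhammer_one, eval_X, pow_one, hab] at h
    refine h.trans ?_
    field_simp
  have hE2 : E (fun _ k => (k : ℝ) ^ 2) =
      (b + 1) / b * μ ^ 2 * ε * (ε * b' + 1) / (b' + 1) + μ * ε := by
    simp only [E, hsq, mul_add]
    rw [((hM 2).add (hM 1)).tsum_eq]
    simp only [ascPochhammer_succ_eval, ascPochhammer_one, eval_X, cast_one, hab, pow_one,
      mul_one]
    field_simp
  rw [hE1, hE2]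
  field_simp
  ring
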